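/- Let W act on a vector space via s_i(v) = v − ⟨α_i∨, v⟩α_i. Fix an expression w = s_{i_1}⋯s_{i_N}, a subset S ⊆ {1,…,N}, weights λ, and define a_{jk}(λ) := ⟨α_{i_j}∨, u_{[j+1,k]}(λ)⟩ where u_{[j,k]} is the increasing ordered product of s_{i_l} for l ∈ S ∩ [j,k]. Then for any m ≤ k: (w_{≤k} − w_{≤m−1} u_{[m,k]}) λ = −∑_{m ≤ j ≤ k, j ∉ S} a_{jk}(λ) β_j, where w_{≤k} = s_{i_1}⋯s_{i_k} and β_j = s_{i_1}⋯s_{i_{j−1}}(α_{i_j}). -/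

import Mathlib

/-- The product of the endomorphisms `s (ι l)` over those indices `l ∈ [j,k]` that
belong to `S`, in increasing order of `l`; empty products are the identity. -/
def subProd {K V I : Type*} [Field K] [AddCommGroup V] [Module K V]
    (s : I → Module.End K V) (ι : ℕ → I) (S : Finset ℕ) (j k : ℕ) : Module.End K V :=
  (((List.range' j (k + 1 - j)).filter (fun l => l ∈ S)).map (fun l => s (ι l))).prod

/-- The full product `s_{i_j} ⋯ s_{i_k}`. -/
def fullProd {K V I : Type*} [Field K] [AddCommGroup V] [Module K V]
    (s : I → Module.End K V) (ι : ℕ → I) (j k : ℕ) : Module.End K V :=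
  ((List.range' j (k + 1 - j)).map (fun l => s (ι l))).prod

section Aux
variable {K V I : Type*} [Field K] [AddCommGroup V] [Module K V]

lemma subProd_empty (s : I → Module.End K V) (ι : ℕ → I) (S : Finset ℕ) (k : ℕ) :
    subProd s ι S (k + 1) k = 1 := by
  simp [subProd, Nat.sub_self]

lemma subProd_step (s : I → Module.End K V) (ι : ℕ → I) (S : Finset ℕ) {m k : ℕ}
    (hmk : m ≤ k) :
    subProd s ι S m k = (if m ∈ S then s (ι m) else 1) * subProd s ι S (m + 1) k := by
  unfold subProd
  have h1 : k + 1 - m = (k - m) + 1 := by omega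
  have h2 : k + 1 - (m + 1) = k - m := by omega
  rw [h1, h2, List.range'_succ, List.filter_cons]
  by_cases hm : m ∈ S <;> simp [hm]

lemma fullProd_step (s : I → Module.End K V) (ι : ℕ → I) {m : ℕ} (hm : 1 ≤ m) :
    fullProd s ι 1 m = fullProd s ι 1 (m - 1) * s (ι m) := by
  unfold fullProd
  have h1 : m + 1 - 1 = (m - 1) + 1 := by omega
  have h2 : m - 1 + 1 - 1 = m - 1 := by omega
  have h3 : 1 + (m - 1) = m := by omega
  rw [h1, h2]
  rw [show List.range' 1 (m - 1 + 1) = List.range' 1 (m - 1) ++ [m] by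
    simpa [h3] using (List.range'_concat (step := 1) : List.range' 1 (m - 1 + 1) = _)]
  simp

lemma stmt14_aux (α : I → V) (coroot : I → V →ₗ[K] K) (s : I → Module.End K V)
    (hs : ∀ i v, s i v = v - coroot i v • α i)
    (ι : ℕ → I) (S : Finset ℕ) (k : ℕ) (lam : V) :
    ∀ d m, 1 ≤ m → m + d = k + 1 →
    fullProd s ι 1 k lam - fullProd s ι 1 (m - 1) (subProd s ι S m k lam)
      = - ∑ j ∈ (Finset.Icc m k).filter (fun j => j ∉ S),
          coroot (ι j) (subProd s ι S (j + 1) k lam) •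
            fullProd s ι 1 (j - 1) (α (ι j)) := by
  intro d
  induction d with
  | zero =>
    intro m hm hd
    have hmk : m = k + 1 := by omega
    subst hmk
    rw [subProd_empty]
    simp [Finset.Icc_eq_empty_of_lt (by omega : k < k + 1)]
  | succ d ih =>
    intro m hm hd
    have hmk : m ≤ k := by omega
    have hIH := ih (m + 1) (by omega) (by omega)
    rw [Nat.add_sub_cancel] at hIH
    rw [subProd_step s ι S hmk]
    by_cases hmS : m ∈ S
    · have hins : (Finset.Icc m k).filter (fun j => j ∉ S)
          = (Finset.Icc (m + 1) k).filter (fun j => j ∉ S) := by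
        ext j
        simp only [Finset.mem_filter, Finset.mem_Icc]
        constructor
        · rintro ⟨⟨h1, h2⟩, h3⟩
          have hne : j ≠ m := fun h => h3 (h ▸ hmS)
          exact ⟨⟨by omega, h2⟩, h3⟩
        · rintro ⟨⟨h1, h2⟩, h3⟩
          exact ⟨⟨by omega, h2⟩, h3⟩
      rw [hins, if_pos hmS]
      have hconv : fullProd s ι 1 (m - 1) ((s (ι m) * subProd s ι S (m + 1) k) lam)
          = fullProd s ι 1 m (subProd s ι S (m + 1) k lam) := by
        rw [fullProd_step s ι hm]
        simp [Module.End.mul_apply]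
      rw [hconv]
      exact hIH
    · have hins : (Finset.Icc m k).filter (fun j => j ∉ S)
          = insert m ((Finset.Icc (m + 1) k).filter (fun j => j ∉ S)) := by
        ext j
        simp only [Finset.mem_filter, Finset.mem_Icc, Finset.mem_insert]
        constructor
        · rintro ⟨⟨h1, h2⟩, h3⟩
          rcases eq_or_lt_of_le h1 with h | h
          · exact Or.inl h.symm
          · exact Or.inr ⟨⟨by omega, h2⟩, h3⟩
        · rintro (rfl | ⟨⟨h1, h2⟩, h3⟩)
          · exact ⟨⟨le_rfl, hmk⟩, hmS⟩
          · exact ⟨⟨by omega, h2⟩, h3⟩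
      have hnotmem : m ∉ (Finset.Icc (m + 1) k).filter (fun j => j ∉ S) := by
        simp [Finset.mem_Icc]
      rw [hins, if_neg hmS, one_mul, Finset.sum_insert hnotmem]
      set u := subProd s ι S (m + 1) k lam with hu
      have key : fullProd s ι 1 (m - 1) u
          = fullProd s ι 1 m u
            + coroot (ι m) u • fullProd s ι 1 (m - 1) (α (ι m)) := by
        rw [fullProd_step s ι hm, Module.End.mul_apply, hs, map_sub, map_smul]
        abel
      rw [key, neg_add, ← hIH]
      abel
end Aux

/-- With reflections `s i (v) = v − ⟨α_i∨, v⟩α_i`, an expression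
`w = s_{i_1}⋯s_{i_N}`, a subset `S ⊆ [1,N]` with `a_{jk}(λ) := ⟨α_{i_j}∨, u_{[j+1,k]}(λ)⟩`,
for any `1 ≤ m ≤ k`:
`(w_{≤k} − w_{≤m−1} u_{[m,k]}) λ = −∑_{m ≤ j ≤ k, j ∉ S} a_{jk}(λ) β_j`, where
`w_{≤k} = s_{i_1}⋯s_{i_k}`, `w_{≤0} = 1` and `β_j = s_{i_1}⋯s_{i_{j−1}}(α_{i_j})`. -/
theorem stmt14 {K V I : Type*} [Field K] [AddCommGroup V] [Module K V]
    (α : I → V) (coroot : I → V →ₗ[K] K) (s : I → Module.End K V)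
    (hs : ∀ i v, s i v = v - coroot i v • α i)
    (N : ℕ) (ι : ℕ → I) (S : Finset ℕ) (hS : S ⊆ Finset.Icc 1 N)
    (m k : ℕ) (hm : 1 ≤ m) (hmk : m ≤ k) (hkN : k ≤ N) (lam : V) :
    fullProd s ι 1 k lam - fullProd s ι 1 (m - 1) (subProd s ι S m k lam)
      = - ∑ j ∈ (Finset.Icc m k).filter (fun j => j ∉ S),
          coroot (ι j) (subProd s ι S (j + 1) k lam) •
            fullProd s ι 1 (j - 1) (α (ι j)) := by
  exact stmt14_aux α coroot s hs ι S k lam (k + 1 - m) m hm (by omega)
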